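/- For every t > 0 and every β ≥ 0, ∫_0^β e^{−t v²} (β − v)^{−1/2} dv ≤ C t^{−1/4}, where C = ∫_0^1 (w(1−w))^{−1/2} dw = π. -/
import Mathlib

open MeasureTheory Set

private lemma rpow_neg_half_eq (x : ℝ) (hx : 0 < x) :
    x ^ (-(1:ℝ)/2) = (Real.sqrt x)⁻¹ := by
  rw [show (-(1:ℝ)/2) = -(1/2 : ℝ) by norm_num, Real.rpow_neg hx.le,
    ← Real.sqrt_eq_rpow]

private lemma integrable_beta (β : ℝ) (hβ : 0 < β) :
    IntervalIntegrable (fun v : ℝ => v ^ (-(1:ℝ)/2) * (β - v) ^ (-(1:ℝ)/2))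
      volume 0 β := by
  have hmeas : ∀ s : Set ℝ, AEStronglyMeasurable
      (fun v : ℝ => v ^ (-(1:ℝ)/2) * (β - v) ^ (-(1:ℝ)/2)) (volume.restrict s) := by
    intro s
    apply Measurable.aestronglyMeasurable
    fun_prop
  have h1 : IntervalIntegrable (fun v : ℝ => v ^ (-(1:ℝ)/2) * (β - v) ^ (-(1:ℝ)/2))
      volume 0 (β/2) := by
    rw [intervalIntegrable_iff_integrableOn_Ioc_of_le (by linarith)]
    have hint : IntegrableOn (fun v : ℝ => (β/2) ^ (-(1:ℝ)/2) * v ^ (-(1:ℝ)/2))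
        (Ioc 0 (β/2)) := by
      have := (intervalIntegral.intervalIntegrable_rpow' (a := 0) (b := β/2) (r := -(1:ℝ)/2)
        (by norm_num)).const_mul ((β/2) ^ (-(1:ℝ)/2))
      rwa [intervalIntegrable_iff_integrableOn_Ioc_of_le (by linarith)] at this
    refine MeasureTheory.Integrable.mono hint (hmeas _) ?_
    filter_upwards [ae_restrict_mem measurableSet_Ioc] with v hv
    have hv0 : 0 < v := hv.1
    have hv2 : β/2 ≤ β - v := by linarith [hv.2]
    have h2 : (β - v) ^ (-(1:ℝ)/2) ≤ (β/2) ^ (-(1:ℝ)/2) :=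
      Real.rpow_le_rpow_of_nonpos (by linarith) hv2 (by norm_num)
    rw [Real.norm_eq_abs, Real.norm_eq_abs,
      abs_of_nonneg (mul_nonneg (Real.rpow_nonneg hv0.le _)
        (Real.rpow_nonneg (by linarith) _)),
      abs_of_nonneg (mul_nonneg (Real.rpow_nonneg (by linarith) _)
        (Real.rpow_nonneg hv0.le _))]
    rw [mul_comm ((β/2) ^ (-(1:ℝ)/2))]
    exact mul_le_mul_of_nonneg_left h2 (Real.rpow_nonneg hv0.le _)
  have h2 : IntervalIntegrable (fun v : ℝ => v ^ (-(1:ℝ)/2) * (β - v) ^ (-(1:ℝ)/2))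
      volume (β/2) β := by
    rw [intervalIntegrable_iff_integrableOn_Ioc_of_le (by linarith)]
    have hbase : IntervalIntegrable (fun v : ℝ => (β - v) ^ (-(1:ℝ)/2)) volume (β/2) β := by
      have h := ((intervalIntegral.intervalIntegrable_rpow' (a := 0) (b := β/2)
        (r := -(1:ℝ)/2) (by norm_num)).comp_sub_left β).symm
      have e : β - β/2 = β/2 := by ring
      rwa [e, sub_zero] at h
    have hint : IntegrableOn (fun v : ℝ => (β/2) ^ (-(1:ℝ)/2) * (β - v) ^ (-(1:ℝ)/2))
        (Ioc (β/2) β) := by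
      have := hbase.const_mul ((β/2) ^ (-(1:ℝ)/2))
      rwa [intervalIntegrable_iff_integrableOn_Ioc_of_le (by linarith)] at this
    refine MeasureTheory.Integrable.mono hint (hmeas _) ?_
    filter_upwards [ae_restrict_mem measurableSet_Ioc] with v hv
    have hv0 : (0:ℝ) < β/2 := by linarith
    have h2 : v ^ (-(1:ℝ)/2) ≤ (β/2) ^ (-(1:ℝ)/2) :=
      Real.rpow_le_rpow_of_nonpos hv0 hv.1.le (by norm_num)
    have hvpos : (0:ℝ) < v := lt_trans hv0 hv.1
    rw [Real.norm_eq_abs, Real.norm_eq_abs,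
      abs_of_nonneg (mul_nonneg (Real.rpow_nonneg hvpos.le _)
        (Real.rpow_nonneg (by linarith [hv.2]) _)),
      abs_of_nonneg (mul_nonneg (Real.rpow_nonneg (by linarith) _)
        (Real.rpow_nonneg (by linarith [hv.2]) _))]
    exact mul_le_mul_of_nonneg_right h2 (Real.rpow_nonneg (by linarith [hv.2]) _)
  exact h1.trans h2

private lemma beta_eval (β : ℝ) (hβ : 0 < β) :
    ∫ v in (0:ℝ)..β, v ^ (-(1:ℝ)/2) * (β - v) ^ (-(1:ℝ)/2) = Real.pi := by
  have hF : Continuous (fun v : ℝ => Real.arcsin (2*v/β - 1)) := by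
    exact Real.continuous_arcsin.comp (by continuity)
  have hderiv : ∀ x ∈ Ioo (0:ℝ) β,
      HasDerivAt (fun v : ℝ => Real.arcsin (2*v/β - 1))
        (x ^ (-(1:ℝ)/2) * (β - x) ^ (-(1:ℝ)/2)) x := by
    intro x hx
    have hx0 : 0 < x := hx.1
    have hxβ : x < β := hx.2
    have hne1 : 2*x/β - 1 ≠ -1 := by
      have hpos : 0 < 2*x/β := by positivity
      intro h
      linarith
    have hne2 : 2*x/β - 1 ≠ 1 := by
      have hlt : 2*x/β < 2 := (div_lt_iff₀ (by linarith)).mpr (by linarith)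
      intro h
      linarith
    have hinner : HasDerivAt (fun v : ℝ => 2*v/β - 1) (2/β) x := by
      simpa using (((hasDerivAt_id x).const_mul 2).div_const β).sub_const 1
    have h := (Real.hasDerivAt_arcsin hne1 hne2).comp x hinner
    have hsq : (1:ℝ) - (2*x/β - 1)^2 = 4*x*(β-x)/β^2 := by
      field_simp; ring
    have hsqrt : Real.sqrt (4*x*(β-x)/β^2) = 2*Real.sqrt x*Real.sqrt (β-x)/β := by
      rw [show 4*x*(β-x)/β^2 = (2*Real.sqrt x*Real.sqrt (β-x)/β)^2 by
        rw [div_pow, mul_pow, mul_pow]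
        rw [Real.sq_sqrt hx0.le, Real.sq_sqrt (by linarith : (0:ℝ) ≤ β - x)]
        ring]
      exact Real.sqrt_sq (by positivity)
    have heq : 1 / Real.sqrt (1 - (2*x/β - 1)^2) * (2/β)
        = x ^ (-(1:ℝ)/2) * (β - x) ^ (-(1:ℝ)/2) := by
      rw [hsq, hsqrt, rpow_neg_half_eq x hx0,
        rpow_neg_half_eq (β - x) (by linarith)]
      have hsx : 0 < Real.sqrt x := Real.sqrt_pos.mpr hx0
      have hsy : 0 < Real.sqrt (β - x) := Real.sqrt_pos.mpr (by linarith)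
      field_simp
    rw [← heq]
    exact h
  have hta : Filter.Tendsto (fun v : ℝ => Real.arcsin (2*v/β - 1))
      (nhdsWithin 0 (Ioi 0)) (nhds (-(Real.pi/2))) := by
    have := (hF.tendsto 0).mono_left (nhdsWithin_le_nhds (s := Ioi (0:ℝ)))
    simpa [Real.arcsin_neg_one] using this
  have htb : Filter.Tendsto (fun v : ℝ => Real.arcsin (2*v/β - 1))
      (nhdsWithin β (Iio β)) (nhds (Real.pi/2)) := by
    have := (hF.tendsto β).mono_left (nhdsWithin_le_nhds (s := Iio β))
    have hval : 2*β/β - 1 = 1 := by rw [mul_div_assoc, div_self hβ.ne']; norm_num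
    simpa [hval, Real.arcsin_one] using this
  have key := intervalIntegral.integral_eq_sub_of_hasDerivAt_of_tendsto hβ hderiv
    (integrable_beta β hβ) hta htb
  rw [key]; ring

private lemma exp_bound (t v : ℝ) (ht : 0 < t) (hv : 0 < v) :
    Real.exp (-t * v^2) ≤ t ^ (-(1:ℝ)/4) * v ^ (-(1:ℝ)/2) := by
  set x := t * v^2 with hxdef
  have hx : 0 < x := by positivity
  have h1 : x ^ ((1:ℝ)/4) ≤ Real.exp x := by
    rcases le_total x 1 with h | h
    · calc x ^ ((1:ℝ)/4) ≤ 1 ^ ((1:ℝ)/4) := Real.rpow_le_rpow hx.le h (by norm_num)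
        _ = 1 := Real.one_rpow _
        _ ≤ Real.exp x := by linarith [Real.add_one_le_exp x, hx]
    · calc x ^ ((1:ℝ)/4) ≤ x ^ (1:ℝ) := Real.rpow_le_rpow_of_exponent_le h (by norm_num)
        _ = x := Real.rpow_one _
        _ ≤ Real.exp x := by linarith [Real.add_one_le_exp x]
  have h2 : Real.exp (-x) ≤ x ^ (-(1:ℝ)/4) := by
    rw [Real.exp_neg, show (-(1:ℝ)/4) = -(1/4 : ℝ) by norm_num, Real.rpow_neg hx.le]
    exact inv_anti₀ (Real.rpow_pos_of_pos hx _) h1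
  have h3 : x ^ (-(1:ℝ)/4) = t ^ (-(1:ℝ)/4) * v ^ (-(1:ℝ)/2) := by
    rw [hxdef, Real.mul_rpow ht.le (sq_nonneg v)]
    congr 1
    rw [← Real.rpow_natCast v 2, ← Real.rpow_mul hv.le]
    norm_num
  calc Real.exp (-t * v^2) = Real.exp (-x) := by rw [hxdef]; ring_nf
    _ ≤ x ^ (-(1:ℝ)/4) := h2
    _ = _ := h3

/-- for t > 0 and β ≥ 0,
∫_0^β e^{−t v²} (β − v)^{−1/2} dv ≤ C t^{−1/4} with C = ∫_0^1 (w(1−w))^{−1/2} dw = π. -/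
theorem gaussian_singular_bound_left (t β : ℝ) (ht : 0 < t) (hβ : 0 ≤ β) :
    (∫ w in (0:ℝ)..1, (w * (1 - w)) ^ (-(1:ℝ)/2)) = Real.pi ∧
    ∫ v in (0:ℝ)..β, Real.exp (-t * v^2) * (β - v) ^ (-(1:ℝ)/2)
      ≤ Real.pi * t ^ (-(1:ℝ)/4) := by
  constructor
  · rw [← beta_eval 1 one_pos]
    apply intervalIntegral.integral_congr
    intro w hw
    rw [uIcc_of_le (by norm_num : (0:ℝ) ≤ 1)] at hw
    exact Real.mul_rpow hw.1 (by linarith [hw.2])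
  · rcases eq_or_lt_of_le hβ with h | h
    · rw [← h]
      simp only [intervalIntegral.integral_same]
      positivity
    · have hg : IntervalIntegrable (fun v : ℝ => (β - v) ^ (-(1:ℝ)/2)) volume 0 β := by
        have h := ((intervalIntegral.intervalIntegrable_rpow' (a := 0) (b := β)
          (r := -(1:ℝ)/2) (by norm_num)).comp_sub_left β).symm
        rwa [sub_self, sub_zero] at h
      have hf : IntervalIntegrable
          (fun v : ℝ => Real.exp (-t * v^2) * (β - v) ^ (-(1:ℝ)/2)) volume 0 β :=
        hg.continuousOn_mul (by fun_prop)
      have hG : IntervalIntegrable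
          (fun v : ℝ => t ^ (-(1:ℝ)/4) * (v ^ (-(1:ℝ)/2) * (β - v) ^ (-(1:ℝ)/2)))
          volume 0 β := (integrable_beta β h).const_mul _
      have h0 : ∀ᵐ (v : ℝ), v ≠ 0 := by
        rw [ae_iff]
        simp only [not_not]
        simpa [Set.setOf_eq_eq_singleton] using Real.volume_singleton (a := 0)
      have hbnd := intervalIntegral.integral_mono_ae_restrict h.le hf hG ?_
      · calc ∫ v in (0:ℝ)..β, Real.exp (-t * v^2) * (β - v) ^ (-(1:ℝ)/2)
            ≤ ∫ v in (0:ℝ)..β, t ^ (-(1:ℝ)/4) * (v ^ (-(1:ℝ)/2) * (β - v) ^ (-(1:ℝ)/2)) := hbnd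
          _ = t ^ (-(1:ℝ)/4) * ∫ v in (0:ℝ)..β, v ^ (-(1:ℝ)/2) * (β - v) ^ (-(1:ℝ)/2) :=
              intervalIntegral.integral_const_mul _ _
          _ = Real.pi * t ^ (-(1:ℝ)/4) := by rw [beta_eval β h]; ring
      · filter_upwards [ae_restrict_mem measurableSet_Icc, ae_restrict_of_ae h0]
          with v hv hv0
        have hv1 : 0 < v := lt_of_le_of_ne hv.1 (Ne.symm hv0)
        have := mul_le_mul_of_nonneg_right (exp_bound t v ht hv1)
          (Real.rpow_nonneg (by linarith [hv.2] : (0:ℝ) ≤ β - v) (-(1:ℝ)/2))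
        calc Real.exp (-t * v^2) * (β - v) ^ (-(1:ℝ)/2)
            ≤ t ^ (-(1:ℝ)/4) * v ^ (-(1:ℝ)/2) * (β - v) ^ (-(1:ℝ)/2) := this
          _ = t ^ (-(1:ℝ)/4) * (v ^ (-(1:ℝ)/2) * (β - v) ^ (-(1:ℝ)/2)) := by ring
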